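/- arXiv:1501.03367 — 3 statements merged into one kernel-verified Lean document; each statement's English description precedes it below -/
import Mathlib

section
/- Let $(X,\mu)$ be a probability space and $(\alpha_n)_{n\in\mathbb{N}}$ a sequence of countable Borel partitions of $X$. If $\sum_{n\in\mathbb{N}} H(\alpha_n) < \infty$, where $H$ denotes Shannon entropy, then the common refinement $\beta = \bigvee_{n\in\mathbb{N}} \alpha_n$ is essentially countable, i.e., after discarding a null set, $\beta$ has only countably many nonempty classes. -/
open MeasureTheory Real
open scoped ENNReal

/-- Shannon entropy of a countable partition of `X`, given as a labeling
function `p : X → ι` (classes are fibers of `p`). Value in `[0,∞]`. -/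
noncomputable def ent {X ι : Type*} [MeasurableSpace X] [Countable ι]
    (μ : Measure X) (p : X → ι) : ℝ≥0∞ :=
  ∑' i : ι, ENNReal.ofReal (negMulLog (μ (p ⁻¹' {i})).toReal)

lemma negMulLog_ge_of_le_half {x : ℝ} (h0 : 0 ≤ x) (h2 : x ≤ 1/2) :
    x * Real.log 2 ≤ negMulLog x := by
  rcases eq_or_lt_of_le h0 with h | h
  · simp [← h, negMulLog]
  · rw [negMulLog, neg_mul, ← mul_neg, ← Real.log_inv]
    refine mul_le_mul_of_nonneg_left (Real.log_le_log (by norm_num) ?_) h.le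
    rw [le_inv_comm₀ (by norm_num) h]
    linarith

lemma key_aux {X : Type*} [MeasurableSpace X] (μ : Measure X) [IsProbabilityMeasure μ]
    (p : X → ℕ) (hp : Measurable p) (s : Set ℕ)
    (hs : ∀ j ∈ s, μ (p ⁻¹' {j}) ≤ 1/2) :
    ENNReal.ofReal (Real.log 2) * μ (p ⁻¹' s) ≤ ent μ p := by
  have hpre : p ⁻¹' s = ⋃ j ∈ s, p ⁻¹' {j} := by ext x; simp
  have hdisj : s.PairwiseDisjoint (fun j => p ⁻¹' {j}) := fun i _ j _ hij =>
    Set.disjoint_left.2 fun x hxi hxj => hij (by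
      simp only [Set.mem_preimage, Set.mem_singleton_iff] at hxi hxj
      rw [← hxi, ← hxj])
  have hmu : μ (p ⁻¹' s) = ∑' j : s, μ (p ⁻¹' {(j : ℕ)}) := by
    rw [hpre, measure_biUnion s.to_countable hdisj (fun j _ => hp (measurableSet_singleton j))]
  calc ENNReal.ofReal (Real.log 2) * μ (p ⁻¹' s)
      = ∑' j : s, ENNReal.ofReal (Real.log 2) * μ (p ⁻¹' {(j : ℕ)}) := by
        rw [hmu, ENNReal.tsum_mul_left]
    _ ≤ ∑' j : s, ENNReal.ofReal (negMulLog (μ (p ⁻¹' {(j : ℕ)})).toReal) := by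
        refine ENNReal.tsum_le_tsum fun j => ?_
        have hfin : μ (p ⁻¹' {(j : ℕ)}) ≠ ⊤ := measure_ne_top μ _
        have h2 : (μ (p ⁻¹' {(j : ℕ)})).toReal ≤ 1/2 := by
          have := hs j j.2
          have h12 : ((1 : ℝ≥0∞)/2).toReal = 1/2 := by simp
          calc (μ (p ⁻¹' {(j : ℕ)})).toReal ≤ ((1 : ℝ≥0∞)/2).toReal :=
                ENNReal.toReal_mono (by simp) this
            _ = 1/2 := h12
        calc ENNReal.ofReal (Real.log 2) * μ (p ⁻¹' {(j : ℕ)})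
            = ENNReal.ofReal ((μ (p ⁻¹' {(j : ℕ)})).toReal * Real.log 2) := by
              rw [ENNReal.ofReal_mul ENNReal.toReal_nonneg, mul_comm,
                ENNReal.ofReal_toReal hfin]
          _ ≤ ENNReal.ofReal (negMulLog (μ (p ⁻¹' {(j : ℕ)})).toReal) :=
              ENNReal.ofReal_le_ofReal
                (negMulLog_ge_of_le_half ENNReal.toReal_nonneg h2)
    _ ≤ ent μ p := ENNReal.tsum_comp_le_tsum_of_injective Subtype.val_injective _

lemma key {X : Type*} [MeasurableSpace X] (μ : Measure X) [IsProbabilityMeasure μ]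
    (p : X → ℕ) (hp : Measurable p) :
    ∃ i : ℕ, ENNReal.ofReal (Real.log 2) * μ {x | p x ≠ i} ≤ ent μ p := by
  by_cases h : ∃ i, 1/2 < μ (p ⁻¹' {i})
  · obtain ⟨i, hi⟩ := h
    refine ⟨i, ?_⟩
    have hset : {x | p x ≠ i} = p ⁻¹' ({i}ᶜ) := rfl
    rw [hset]
    refine key_aux μ p hp _ fun j hj => ?_
    have hdisj : Disjoint (p ⁻¹' {j}) (p ⁻¹' {i}) := by
      refine Set.disjoint_left.2 fun x hxj hxi => ?_
      simp only [Set.mem_preimage, Set.mem_singleton_iff] at hxj hxi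
      exact hj (by rw [← hxj, hxi]; rfl)
    have hsum : μ (p ⁻¹' {j}) + μ (p ⁻¹' {i}) ≤ 1 := by
      rw [← measure_union hdisj (hp (measurableSet_singleton i))]
      exact prob_le_one
    by_contra hcon
    push_neg at hcon
    have : (1 : ℝ≥0∞) < μ (p ⁻¹' {j}) + μ (p ⁻¹' {i}) := by
      calc (1 : ℝ≥0∞) = 1/2 + 1/2 := by rw [ENNReal.add_halves]
        _ < μ (p ⁻¹' {j}) + μ (p ⁻¹' {i}) := ENNReal.add_lt_add hcon hi
    exact absurd hsum this.not_ge
  · push_neg at h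
    refine ⟨0, ?_⟩
    have hset : {x | p x ≠ 0} = p ⁻¹' ({0}ᶜ) := rfl
    rw [hset]
    exact key_aux μ p hp _ fun j _ => h j

/-- If `(αₙ)` is a sequence of countable Borel partitions of a probability
space `(X, μ)` with `∑ₙ H(αₙ) < ∞`, then the join `⋁ₙ αₙ` is essentially
countable: after discarding a null set, the joint labeling
`x ↦ (n ↦ αₙ(x))` takes only countably many values. -/
theorem stmt0 {X : Type*} [MeasurableSpace X] (μ : Measure X) [IsProbabilityMeasure μ]
    (α : ℕ → X → ℕ) (hmeas : ∀ n, Measurable (α n))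
    (hent : ∑' n : ℕ, ent μ (α n) ≠ ⊤) :
    ∃ S : Set X, MeasurableSet S ∧ μ Sᶜ = 0 ∧
      Set.Countable ((fun x => fun n => α n x) '' S) := by
  choose i hi using fun n => key μ (α n) (hmeas n)
  set B : ℕ → Set X := fun n => {x | α n x ≠ i n} with hB
  have hBmeas : ∀ n, MeasurableSet (B n) := fun n =>
    ((hmeas n) (measurableSet_singleton (i n))).compl
  have hc : (0:ℝ≥0∞) < ENNReal.ofReal (Real.log 2) := by
    rw [ENNReal.ofReal_pos]; exact Real.log_pos (by norm_num)
  have hsum : ∑' n, μ (B n) ≠ ⊤ := by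
    intro htop
    have h1 : ENNReal.ofReal (Real.log 2) * ∑' n, μ (B n) ≤ ∑' n, ent μ (α n) := by
      rw [← ENNReal.tsum_mul_left]
      exact ENNReal.tsum_le_tsum hi
    rw [htop, ENNReal.mul_top hc.ne'] at h1
    exact hent (top_le_iff.mp h1)
  set L : Set X := Filter.limsup B Filter.atTop with hLdef
  have hL0 : μ L = 0 := measure_limsup_atTop_eq_zero hsum
  have hLeq : L = ⋂ N, ⋃ n, ⋃ _ : N ≤ n, B n := by
    rw [hLdef, Filter.limsup_eq_iInf_iSup_of_nat]
    simp only [Set.iInf_eq_iInter, Set.iSup_eq_iUnion]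
  have hLmeas : MeasurableSet L := by
    rw [hLeq]
    exact MeasurableSet.iInter fun N => MeasurableSet.iUnion fun n =>
      MeasurableSet.iUnion fun _ => hBmeas n
  refine ⟨Lᶜ, hLmeas.compl, by rwa [compl_compl], ?_⟩
  have hsub : (fun x => fun n => α n x) '' Lᶜ ⊆
      ⋃ N, Set.range (fun g : Fin N → ℕ => fun n =>
        if h : n < N then g ⟨n, h⟩ else i n) := by
    rintro f ⟨x, hx, rfl⟩
    rw [hLeq] at hx
    simp only [Set.compl_iInter, Set.mem_iUnion, Set.compl_iUnion] at hx
    obtain ⟨N, hN⟩ := hx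
    simp only [Set.mem_iInter, Set.mem_compl_iff] at hN
    refine Set.mem_iUnion.2 ⟨N, ⟨fun k => α k x, ?_⟩⟩
    funext n
    by_cases hn : n < N
    · simp [hn]
    · have := hN n (not_lt.mp hn)
      simp only [hB, Set.mem_setOf_eq, not_not] at this
      simp [hn, this]
  exact (Set.countable_iUnion fun N => Set.countable_range _).mono hsub
end

section
/- Let $\mathcal{Q} \leq \mathcal{P}$ be finite partitions of $([0,1],\lambda)$ (Lebesgue measure) with $\mathcal{Q}$ coarser than $\mathcal{P}$, and let $0 < r < H(\mathcal{P} \mid \mathcal{Q})$. Then there is a finite partition $\mathcal{R}$ of $[0,1]$ with $\mathcal{Q} \leq \mathcal{R}$ and $H(\mathcal{P} \mid \mathcal{R}) = r$. -/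
open MeasureTheory Real Set

noncomputable def entF {ι : Type*} [Fintype ι] (μ : Measure ℝ) (p : ℝ → ι) : ℝ :=
  ∑ i : ι, negMulLog (μ (p ⁻¹' {i})).toReal

noncomputable def condEntF {ι κ : Type*} [Fintype ι] [Fintype κ]
    (μ : Measure ℝ) (p : ℝ → ι) (q : ℝ → κ) : ℝ :=
  entF μ (fun x => (p x, q x)) - entF μ q

lemma entF_congr {ι : Type*} [Fintype ι] {μ : Measure ℝ} {p q : ℝ → ι}
    (h : p =ᵐ[μ] q) : entF μ p = entF μ q := by
  unfold entF
  refine Finset.sum_congr rfl fun i _ => ?_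
  have : μ (p ⁻¹' {i}) = μ (q ⁻¹' {i}) := by
    refine measure_congr (h.mono fun x hx => ?_)
    show (p x = i) = (q x = i)
    rw [hx]
  rw [this]

lemma entF_comp_inj {ι κ : Type*} [Fintype ι] [Fintype κ] [DecidableEq κ]
    (μ : Measure ℝ) (p : ℝ → ι) (f : ι → κ) (hf : Function.Injective f) :
    entF μ (fun x => f (p x)) = entF μ p := by
  classical
  unfold entF
  have h1 : ∀ i : ι, ((fun x => f (p x)) ⁻¹' {f i}) = p ⁻¹' {i} := by
    intro i; ext x; simp [hf.eq_iff]
  have h2 : (∑ i : ι, negMulLog (μ (p ⁻¹' {i})).toReal)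
      = ∑ j ∈ Finset.univ.image f, negMulLog (μ ((fun x => f (p x)) ⁻¹' {j})).toReal := by
    rw [Finset.sum_image (fun a _ b _ hab => hf hab)]
    exact Finset.sum_congr rfl fun i _ => by rw [h1]
  rw [h2]
  refine (Finset.sum_subset (Finset.subset_univ (Finset.univ.image f)) fun j _ hj => ?_).symm
  have : ((fun x => f (p x)) ⁻¹' {j}) = ∅ := by
    ext x; simp only [Set.mem_preimage, Set.mem_singleton_iff, Set.mem_empty_iff_false, iff_false]
    intro hx; exact hj (Finset.mem_image.2 ⟨p x, Finset.mem_univ _, hx⟩)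
  simp [this]

lemma entF_comp_equiv {ι κ : Type*} [Fintype ι] [Fintype κ]
    (μ : Measure ℝ) (p : ℝ → ι) (e : ι ≃ κ) :
    entF μ (fun x => e (p x)) = entF μ p := by
  classical
  exact entF_comp_inj μ p e e.injective

lemma cont_Iic (S : Set ℝ) :
    Continuous fun t => ((volume.restrict (Icc (0:ℝ) 1)) (S ∩ Iic t)).toReal := by
  set μ := volume.restrict (Icc (0:ℝ) 1) with hμ
  have hfin : ∀ X : Set ℝ, μ X ≠ ⊤ := fun X => (measure_lt_top μ X).ne
  set f : ℝ → ℝ := fun t => (μ (S ∩ Iic t)).toReal with hf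
  have mono : ∀ s t : ℝ, s ≤ t → f s ≤ f t := by
    intro s t h
    exact ENNReal.toReal_mono (hfin _)
      (measure_mono (inter_subset_inter_right _ (Iic_subset_Iic.2 h)))
  have bound : ∀ s t : ℝ, s ≤ t → f t ≤ f s + (t - s) := by
    intro s t h
    have h1 : μ (S ∩ Iic t) ≤ μ (S ∩ Iic s) + ENNReal.ofReal (t - s) := by
      calc μ (S ∩ Iic t) ≤ μ ((S ∩ Iic s) ∪ Ioc s t) := measure_mono (by
            intro x hx
            rcases le_or_gt x s with hxs | hxs
            · exact Or.inl ⟨hx.1, hxs⟩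
            · exact Or.inr ⟨hxs, hx.2⟩)
        _ ≤ μ (S ∩ Iic s) + μ (Ioc s t) := measure_union_le _ _
        _ ≤ μ (S ∩ Iic s) + ENNReal.ofReal (t - s) := by
            gcongr
            rw [hμ, Measure.restrict_apply measurableSet_Ioc]
            calc volume (Ioc s t ∩ Icc 0 1) ≤ volume (Ioc s t) :=
                  measure_mono inter_subset_left
              _ = ENNReal.ofReal (t - s) := Real.volume_Ioc
    calc f t ≤ (μ (S ∩ Iic s) + ENNReal.ofReal (t - s)).toReal :=
          ENNReal.toReal_mono (by simp [ENNReal.add_ne_top, hfin]) h1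
      _ = f s + (t - s) := by
          rw [ENNReal.toReal_add (hfin _) ENNReal.ofReal_ne_top,
            ENNReal.toReal_ofReal (sub_nonneg.2 h)]
  have hlip : LipschitzWith 1 f := by
    refine LipschitzWith.of_dist_le_mul fun x y => ?_
    rw [NNReal.coe_one, one_mul, Real.dist_eq, Real.dist_eq]
    rcases le_total x y with h | h
    · have h1 := mono x y h; have h2 := bound x y h
      rw [abs_of_nonpos (by linarith), abs_of_nonpos (by linarith)]; linarith
    · have h1 := mono y x h; have h2 := bound y x h
      rw [abs_of_nonneg (by linarith), abs_of_nonneg (by linarith)]; linarith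
  exact hlip.continuous

lemma cont_piece (S1 S2 : Set ℝ) (h2 : MeasurableSet S2) :
    Continuous fun t =>
      ((volume.restrict (Icc (0:ℝ) 1)) ((S1 ∩ Iic t) ∪ (S2 ∩ Ioi t))).toReal := by
  set μ := volume.restrict (Icc (0:ℝ) 1) with hμ
  have hfin : ∀ X : Set ℝ, μ X ≠ ⊤ := fun X => (measure_lt_top μ X).ne
  have hsplit : ∀ t : ℝ, (μ ((S1 ∩ Iic t) ∪ (S2 ∩ Ioi t))).toReal
      = (μ (S1 ∩ Iic t)).toReal + ((μ S2).toReal - (μ (S2 ∩ Iic t)).toReal) := by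
    intro t
    have hd : Disjoint (S1 ∩ Iic t) (S2 ∩ Ioi t) :=
      (Set.Iic_disjoint_Ioi le_rfl).mono inter_subset_right inter_subset_right
    rw [measure_union hd (h2.inter measurableSet_Ioi), ENNReal.toReal_add (hfin _) (hfin _)]
    congr 1
    have hS2 : μ S2 = μ (S2 ∩ Iic t) + μ (S2 ∩ Ioi t) := by
      rw [← measure_union ((Set.Iic_disjoint_Ioi le_rfl).mono inter_subset_right
        inter_subset_right) (h2.inter measurableSet_Ioi), ← inter_union_distrib_left,
        Iic_union_Ioi, inter_univ]
    rw [hS2, ENNReal.toReal_add (hfin _) (hfin _)]; ring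
  have heq : (fun t => (μ ((S1 ∩ Iic t) ∪ (S2 ∩ Ioi t))).toReal)
      = fun t => (μ (S1 ∩ Iic t)).toReal + ((μ S2).toReal - (μ (S2 ∩ Iic t)).toReal) :=
    funext hsplit
  rw [heq]
  exact (cont_Iic S1).add (continuous_const.sub (cont_Iic S2))

/-- Let `Q ≤ P` be finite partitions of `([0,1], λ)` with `Q` coarser than `P`,
and let `0 < r < H(P | Q)`.  Then there is a finite partition `R` of `[0,1]`
with `Q ≤ R` and `H(P | R) = r`. -/
theorem stmt4 {m k : ℕ} (P : ℝ → Fin m) (Q : ℝ → Fin k)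
    (hP : Measurable P) (hQ : Measurable Q)
    (hcoarse : ∃ f : Fin m → Fin k, Q = f ∘ P)
    (r : ℝ) (hr : 0 < r)
    (hrlt : r < condEntF (volume.restrict (Set.Icc (0:ℝ) 1)) P Q) :
    ∃ (n : ℕ) (R : ℝ → Fin n), Measurable R ∧
      (∃ g : Fin n → Fin k, Q = g ∘ R) ∧
      condEntF (volume.restrict (Set.Icc (0:ℝ) 1)) P R = r := by
  classical
  set μ := volume.restrict (Set.Icc (0:ℝ) 1) with hμ
  have i0 : Fin m := P 0
  set Rt : ℝ → ℝ → Fin m × Fin k := fun t x => (if x ≤ t then P x else i0, Q x) with hRt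
  set A : Fin m → Set ℝ := fun a => P ⁻¹' {a} with hA'
  set B : Fin k → Set ℝ := fun j => Q ⁻¹' {j} with hB'
  set S2 : Fin m → Set ℝ := fun a => if a = i0 then Set.univ else ∅ with hS2'
  have hS2meas : ∀ a, MeasurableSet (S2 a) := fun a => by
    by_cases h : a = i0 <;> simp [hS2', h]
  have hA : ∀ a, MeasurableSet (A a) := fun a => hP (measurableSet_singleton a)
  have hB : ∀ j, MeasurableSet (B j) := fun j => hQ (measurableSet_singleton j)
  have hpre : ∀ (t : ℝ) (c : Fin m × Fin k),
      (Rt t) ⁻¹' {c} = (((A c.1 ∩ B c.2) ∩ Iic t) ∪ ((S2 c.1 ∩ B c.2) ∩ Ioi t)) := by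
    intro t c
    ext x
    by_cases hx : x ≤ t <;> by_cases ha : c.1 = i0 <;>
      simp [hRt, hA', hB', hS2', hx, ha, Prod.ext_iff, not_le, eq_comm, and_comm,
        lt_of_not_ge] <;>
      exact fun h => (ha h.symm).elim
  have hpre2 : ∀ (t : ℝ) (c : Fin m × (Fin m × Fin k)),
      ((fun x => (P x, Rt t x)) ⁻¹' {c})
        = (((A c.1 ∩ (A c.2.1 ∩ B c.2.2)) ∩ Iic t)
            ∪ ((A c.1 ∩ (S2 c.2.1 ∩ B c.2.2)) ∩ Ioi t)) := by
    intro t c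
    ext x
    by_cases hx : x ≤ t <;> by_cases ha : c.2.1 = i0 <;>
      simp [hRt, hA', hB', hS2', hx, ha, Prod.ext_iff, not_le, eq_comm, and_comm,
        and_assoc, lt_of_not_ge] <;>
      exact fun _ h => (ha h.symm).elim
  have hcont : Continuous fun t => condEntF μ P (Rt t) := by
    unfold condEntF entF
    apply Continuous.sub
    · apply continuous_finset_sum
      intro c _
      have he : (fun t => negMulLog (μ ((fun x => (P x, Rt t x)) ⁻¹' {c})).toReal)
          = fun t => negMulLog ((μ (((A c.1 ∩ (A c.2.1 ∩ B c.2.2)) ∩ Iic t)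
              ∪ ((A c.1 ∩ (S2 c.2.1 ∩ B c.2.2)) ∩ Ioi t))).toReal) :=
        funext fun t => by rw [hpre2 t c]
      rw [he]
      exact continuous_negMulLog.comp
        (cont_piece _ _ ((hA _).inter ((hS2meas _).inter (hB _))))
    · apply continuous_finset_sum
      intro c _
      have he : (fun t => negMulLog (μ ((Rt t) ⁻¹' {c})).toReal)
          = fun t => negMulLog ((μ (((A c.1 ∩ B c.2) ∩ Iic t)
              ∪ ((S2 c.1 ∩ B c.2) ∩ Ioi t))).toReal) :=
        funext fun t => by rw [hpre t c]
      rw [he]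
      exact continuous_negMulLog.comp
        (cont_piece _ _ ((hS2meas _).inter (hB _)))
  have hae : ∀ᵐ x ∂μ, x ∈ Set.Icc (0:ℝ) 1 := ae_restrict_mem measurableSet_Icc
  have hend1 : condEntF μ P (Rt (-1)) = condEntF μ P Q := by
    have h1 : (Rt (-1)) =ᵐ[μ] fun x => (i0, Q x) := hae.mono fun x hx => by
      have hx' : ¬ x ≤ (-1:ℝ) := by linarith [hx.1]
      simp [hRt, hx']
    have h2 : (fun x => (P x, Rt (-1) x)) =ᵐ[μ] fun x => (P x, (i0, Q x)) :=
      h1.mono fun x hx => by simp only [hx]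
    have e1 : entF μ (fun x => (P x, ((i0 : Fin m), Q x))) = entF μ (fun x => (P x, Q x)) :=
      entF_comp_inj μ (fun x => (P x, Q x)) (fun c => (c.1, (i0, c.2)))
        (fun a b hab => by
          simp only [Prod.mk.injEq] at hab
          exact Prod.ext hab.1 hab.2.2)
    have e2 : entF μ (fun x => ((i0 : Fin m), Q x)) = entF μ Q :=
      entF_comp_inj μ Q (fun j => ((i0 : Fin m), j))
        (fun a b hab => by simpa using hab)
    unfold condEntF
    rw [entF_congr h2, entF_congr h1, e1, e2]
  have hend2 : condEntF μ P (Rt 2) = 0 := by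
    have h1 : (Rt 2) =ᵐ[μ] fun x => (P x, Q x) := hae.mono fun x hx => by
      have hx' : x ≤ (2:ℝ) := by linarith [hx.2]
      simp [hRt, hx']
    have h2 : (fun x => (P x, Rt 2 x)) =ᵐ[μ] fun x => (P x, (P x, Q x)) :=
      h1.mono fun x hx => by simp only [hx]
    have e1 : entF μ (fun x => (P x, (P x, Q x))) = entF μ (fun x => (P x, Q x)) :=
      entF_comp_inj μ (fun x => (P x, Q x)) (fun c => (c.1, c))
        (fun a b hab => by
          simp only [Prod.mk.injEq] at hab
          exact hab.2)
    unfold condEntF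
    rw [entF_congr h2, entF_congr h1, e1, sub_self]
  have hmem : r ∈ Set.Icc ((fun t => condEntF μ P (Rt t)) 2)
      ((fun t => condEntF μ P (Rt t)) (-1)) := by
    simp only [hend1, hend2]
    exact ⟨hr.le, hrlt.le⟩
  obtain ⟨t, -, hFt⟩ := intermediate_value_Icc' (by norm_num : (-1:ℝ) ≤ 2)
    hcont.continuousOn hmem
  refine ⟨m * k, fun x => finProdFinEquiv (Rt t x), ?_, ?_, ?_⟩
  · have hRtm : Measurable (Rt t) :=
      (Measurable.ite measurableSet_Iic hP measurable_const).prod hQ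
    exact (measurable_of_countable _).comp hRtm
  · refine ⟨fun c => (finProdFinEquiv.symm c).2, ?_⟩
    funext x
    show Q x = (finProdFinEquiv.symm (finProdFinEquiv (Rt t x))).2
    rw [Equiv.symm_apply_apply]
  · have e1 : entF μ (fun x => (P x, finProdFinEquiv (Rt t x)))
        = entF μ (fun x => (P x, Rt t x)) :=
      entF_comp_inj μ (fun x => (P x, Rt t x)) (fun c => (c.1, finProdFinEquiv c.2))
        (fun a b hab => by
          simp only [Prod.mk.injEq] at hab
          exact Prod.ext hab.1 (finProdFinEquiv.injective hab.2))
    have e2 : entF μ (fun x => finProdFinEquiv (Rt t x)) = entF μ (Rt t) :=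
      entF_comp_equiv μ (Rt t) finProdFinEquiv
    unfold condEntF at hFt ⊢
    rw [e1, e2]
    exact hFt
end

section
/- Let $G$ act ergodically and measure-preservingly on a probability space $(X,\mu)$, let $\mathcal{F}$ be a $G$-invariant sub-$\sigma$-algebra, and let $B \in \mathcal{F}$ with $\mu(B) > 0$. For each $g \in G$ define the first-return map $\gamma_g \in [[E_G^X]]$ on $B$ by $\gamma_g(x) = g^i\cdot x$ where $i > 0$ is least with $g^i \cdot x \in B$. Then $\gamma_g$ is defined almost everywhere on $B$ (i.e., its domain and range are conull in $B$), $\gamma_g$ is $\mathcal{F}$-expressible, and if $\mu$ is ergodic for $G$ then the group $\Gamma$ generated by $\{\gamma_g : g \in G\}$ acts ergodically on $(B, \mu_B)$, where $\mu_B$ is the normalized restriction of $\mu$ to $B$. -/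
open MeasureTheory
open scoped symmDiff Classical

/-- A partial Borel bijection `θ` with domain `D` is `F`-expressible if
`D` and `θ(D)` lie in `F` and there is an `F`-measurable partition
`{Z_g : g ∈ G}` of `D` with `θ(x) = g • x` on `Z_g`. -/
def Expressible (G : Type*) {X : Type*} [Group G] [MulAction G X]
    (F : MeasurableSpace X) (D : Set X) (θ : X → X) : Prop :=
  MeasurableSet[F] D ∧ MeasurableSet[F] (θ '' D) ∧
  ∃ Z : G → Set X, (∀ g : G, MeasurableSet[F] (Z g)) ∧
    (Pairwise fun g g' : G => Disjoint (Z g) (Z g')) ∧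
    (⋃ g : G, Z g) = D ∧
    ∀ g : G, ∀ x ∈ Z g, θ x = g • x

section Aux
variable {G X : Type*} [Group G] [MulAction G X]

/-- Domain of the first return map. -/
def Dom (B : Set X) (g : G) : Set X := {x ∈ B | ∃ i, 0 < i ∧ g ^ i • x ∈ B}

/-- Return time. -/
noncomputable def ret (B : Set X) (g : G) (x : X) : ℕ :=
  if h : ∃ i, 0 < i ∧ g ^ i • x ∈ B then Nat.find h else 0

/-- First return map. -/
noncomputable def gam (B : Set X) (g : G) (x : X) : X := g ^ ret B g x • x

lemma ret_spec {B : Set X} {g : G} {x : X} (hx : ∃ i, 0 < i ∧ g ^ i • x ∈ B) :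
    0 < ret B g x ∧ g ^ ret B g x • x ∈ B ∧
      ∀ j, 0 < j → j < ret B g x → g ^ j • x ∉ B := by
  rw [ret, dif_pos hx]
  refine ⟨(Nat.find_spec hx).1, (Nat.find_spec hx).2, fun j hj hji hjB => ?_⟩
  exact Nat.find_min hx hji ⟨hj, hjB⟩

lemma ret_eq {B : Set X} {g : G} {x : X} {i : ℕ} (hi : 0 < i) (hiB : g ^ i • x ∈ B)
    (hmin : ∀ j, 0 < j → j < i → g ^ j • x ∉ B) : ret B g x = i := by
  have hx : ∃ i, 0 < i ∧ g ^ i • x ∈ B := ⟨i, hi, hiB⟩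
  have h := ret_spec (B := B) hx
  rcases lt_trichotomy (ret B g x) i with h' | h' | h'
  · exact absurd h.2.1 (hmin _ h.1 h')
  · exact h'
  · exact absurd hiB (h.2.2 _ hi h')

lemma pow_mul_pow_inv (g : G) {j i : ℕ} (hji : j ≤ i) :
    g ^ j * (g ^ i)⁻¹ = (g ^ (i - j))⁻¹ := by
  have : g ^ i = g ^ (i - j) * g ^ j := by
    rw [← pow_add, Nat.sub_add_cancel hji]
  rw [this, mul_inv_rev, ← mul_assoc, mul_inv_cancel, one_mul]

lemma inv_pow_mul_pow (g : G) {i j : ℕ} (hij : i ≤ j) :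
    (g ^ i)⁻¹ * g ^ j = g ^ (j - i) := by
  have : g ^ j = g ^ i * g ^ (j - i) := by
    rw [← pow_add, Nat.add_sub_cancel' hij]
  rw [this, ← mul_assoc, inv_mul_cancel, one_mul]

lemma gam_image (B : Set X) (g : G) : gam B g '' Dom B g = Dom B g⁻¹ := by
  ext y
  constructor
  · rintro ⟨x, ⟨hxB, hx⟩, rfl⟩
    have h := ret_spec (B := B) hx
    refine ⟨h.2.1, ret B g x, h.1, ?_⟩
    rw [gam, inv_pow, inv_smul_smul]
    exact hxB
  · rintro ⟨hyB, hy⟩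
    have h := ret_spec (B := B) hy
    set i := ret B g⁻¹ y with hidef
    set x := (g⁻¹) ^ i • y with hxdef
    have hxy : g ^ i • x = y := by
      rw [hxdef, inv_pow, smul_inv_smul]
    have hxB : x ∈ B := h.2.1
    have hmin : ∀ j, 0 < j → j < i → g ^ j • x ∉ B := by
      intro j hj hji
      have : g ^ j • x = (g⁻¹) ^ (i - j) • y := by
        rw [hxdef, smul_smul, inv_pow, inv_pow,
          pow_mul_pow_inv g hji.le]
      rw [this]
      exact h.2.2 _ (Nat.sub_pos_of_lt hji) (Nat.sub_lt (hj.trans hji) hj)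
    have hiB : g ^ i • x ∈ B := hxy ▸ hyB
    have hret : ret B g x = i := ret_eq h.1 hiB hmin
    exact ⟨x, ⟨hxB, i, h.1, hiB⟩, by rw [gam, hret, hxy]⟩

lemma gam_injOn_aux (B : Set X) (g : G) {x y : X}
    (hx : x ∈ Dom B g) (hy : y ∈ Dom B g) (hij : ret B g x ≤ ret B g y)
    (hgam : gam B g x = gam B g y) : x = y := by
  have hxs := ret_spec (B := B) hx.2
  have hys := ret_spec (B := B) hy.2
  have hx' : x = g ^ (ret B g y - ret B g x) • y := by
    have := congrArg (fun z => (g ^ ret B g x)⁻¹ • z) hgam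
    simpa [gam, smul_smul, inv_pow_mul_pow g hij] using this
  rcases eq_or_lt_of_le hij with heq | hlt
  · rw [hx', heq, Nat.sub_self, pow_zero, one_smul]
  · exact absurd (hx' ▸ hx.1)
      (hys.2.2 _ (Nat.sub_pos_of_lt hlt) (Nat.sub_lt (hxs.1.trans hlt) hxs.1))

lemma gam_injOn (B : Set X) (g : G) : Set.InjOn (gam B g) (Dom B g) := by
  intro x hx y hy hgam
  rcases le_total (ret B g x) (ret B g y) with h | h
  · exact gam_injOn_aux B g hx hy h hgam
  · exact (gam_injOn_aux B g hy hx h hgam.symm).symm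

/-- The set of points with return time exactly `i`. -/
def Sret (B : Set X) (g : G) (i : ℕ) : Set X :=
  {x | x ∈ B ∧ 0 < i ∧ g ^ i • x ∈ B ∧ ∀ j, 0 < j → j < i → g ^ j • x ∉ B}

lemma mem_Sret_iff {B : Set X} {g : G} {i : ℕ} {x : X} :
    x ∈ Sret B g i ↔ x ∈ Dom B g ∧ ret B g x = i := by
  constructor
  · rintro ⟨hxB, hi, hiB, hmin⟩
    exact ⟨⟨hxB, i, hi, hiB⟩, ret_eq hi hiB hmin⟩
  · rintro ⟨⟨hxB, hx⟩, rfl⟩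
    have h := ret_spec (B := B) hx
    exact ⟨hxB, h.1, h.2.1, h.2.2⟩

lemma Sret_meas {F : MeasurableSpace X}
    (hFinv : ∀ (g : G) (A : Set X), MeasurableSet[F] A →
      MeasurableSet[F] ((fun x => g • x) ⁻¹' A))
    {B : Set X} (hB : MeasurableSet[F] B) (g : G) (i : ℕ) :
    MeasurableSet[F] (Sret B g i) := by
  by_cases hi : 0 < i
  · have : Sret B g i = (B ∩ (fun x => g ^ i • x) ⁻¹' B) ∩
        ⋂ j ∈ Set.Ioo 0 i, ((fun x => g ^ j • x) ⁻¹' B)ᶜ := by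
      ext x
      simp only [Sret, Set.mem_setOf_eq, Set.mem_inter_iff, Set.mem_preimage,
        Set.mem_iInter, Set.mem_Ioo, Set.mem_compl_iff, and_imp]
      tauto
    rw [this]
    exact ((hB.inter (hFinv _ _ hB)).inter
      (MeasurableSet.biInter (Set.to_countable _) fun j _ => (hFinv _ _ hB).compl))
  · have : Sret B g i = ∅ := by
      ext x; simp [Sret, hi]
    rw [this]; exact MeasurableSet.empty

lemma Dom_meas {F : MeasurableSpace X}
    (hFinv : ∀ (g : G) (A : Set X), MeasurableSet[F] A →
      MeasurableSet[F] ((fun x => g • x) ⁻¹' A))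
    {B : Set X} (hB : MeasurableSet[F] B) (g : G) :
    MeasurableSet[F] (Dom B g) := by
  have : Dom B g = B ∩ ⋃ i : ℕ, ⋃ _ : 0 < i, (fun x => g ^ i • x) ⁻¹' B := by
    ext x
    simp only [Dom, Set.mem_setOf_eq, Set.mem_inter_iff, Set.mem_iUnion, Set.mem_preimage,
      exists_prop]
  rw [this]
  exact hB.inter (MeasurableSet.iUnion fun i => MeasurableSet.iUnion fun _ => hFinv _ _ hB)

end Aux

/-- First-return maps: for an ergodic p.m.p. action of a countable group `G`
on `(X, μ)`, a `G`-invariant sub-σ-algebra `F`, and `B ∈ F` with `μ(B) > 0`,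
the first-return maps `γ_g(x) = g^i • x` (`i > 0` least with `g^i • x ∈ B`)
are defined a.e. on `B`, are `F`-expressible, and the group they generate
acts ergodically on `(B, μ_B)`. -/
theorem stmt17 {G X : Type*} [Group G] [Countable G]
    (F : MeasurableSpace X)
    [m0 : MeasurableSpace X] [MulAction G X]
    (hBorel : ∀ g : G, Measurable (fun x : X => g • x))
    (μ : Measure X) [IsProbabilityMeasure μ]
    (hpmp : ∀ g : G, MeasurePreserving (fun x : X => g • x) μ μ)
    (herg : ∀ A : Set X, MeasurableSet A →
      (∀ g : G, μ ((fun x => g • x) ⁻¹' A ∆ A) = 0) → μ A = 0 ∨ μ Aᶜ = 0)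
    (hFle : F ≤ m0)
    (hFinv : ∀ (g : G) (A : Set X), MeasurableSet[F] A →
      MeasurableSet[F] ((fun x => g • x) ⁻¹' A))
    (B : Set X) (hB : MeasurableSet[F] B) (hBpos : 0 < μ B) :
    ∃ (γ : G → X → X) (D : G → Set X),
      (∀ g : G,
        D g ⊆ B ∧ μ (B \ D g) = 0 ∧ μ (B \ (γ g '' D g)) = 0 ∧
        Set.InjOn (γ g) (D g) ∧ γ g '' D g ⊆ B ∧
        (∀ x ∈ D g, ∃ i : ℕ, 0 < i ∧ γ g x = g ^ i • x ∧ g ^ i • x ∈ B ∧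
          ∀ j : ℕ, 0 < j → j < i → g ^ j • x ∉ B) ∧
        Expressible G F (D g) (γ g)) ∧
      (∀ A : Set X, MeasurableSet A → A ⊆ B →
        (∀ g : G, μ ((A ∆ (γ g ⁻¹' A)) ∩ D g) = 0) →
        μ A = 0 ∨ μ (B \ A) = 0) := by
  have hBm : MeasurableSet B := hFle B hB
  -- Poincaré recurrence: the domain is conull in B
  have hnull : ∀ g : G, μ (B \ Dom B g) = 0 := by
    intro g
    have hcons := (hpmp g).conservative
    have hsub : B \ Dom B g ⊆ {x ∈ B | ∀ m ≥ 1, (fun x => g • x)^[m] x ∉ B} := by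
      rintro x ⟨hxB, hxD⟩
      refine ⟨hxB, fun m hm hmem => hxD ⟨hxB, m, hm, ?_⟩⟩
      rwa [smul_iterate] at hmem
    exact measure_mono_null hsub
      (hcons.measure_mem_forall_ge_image_notMem_eq_zero hBm.nullMeasurableSet 1)
  refine ⟨fun g => gam B g, fun g => Dom B g, fun g => ?_, ?_⟩
  · refine ⟨fun x hx => hx.1, hnull g, ?_, gam_injOn B g, ?_, ?_, ?_⟩
    · rw [gam_image]; exact hnull g⁻¹
    · rw [gam_image]; exact fun x hx => hx.1
    · intro x hx
      have h := ret_spec (B := B) hx.2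
      exact ⟨ret B g x, h.1, rfl, h.2.1, h.2.2⟩
    · -- expressibility
      refine ⟨Dom_meas hFinv hB g, by rw [gam_image]; exact Dom_meas hFinv hB g⁻¹, ?_⟩
      refine ⟨fun h => ⋃ (i : ℕ) (_ : g ^ i = h), Sret B g i, ?_, ?_, ?_, ?_⟩
      · exact fun h => MeasurableSet.iUnion fun i =>
          MeasurableSet.iUnion fun _ => Sret_meas hFinv hB g i
      · intro h h' hne
        rw [Set.disjoint_left]
        intro x hx hx'
        simp only [Set.mem_iUnion] at hx hx'
        obtain ⟨i, hi, hxi⟩ := hx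
        obtain ⟨i', hi', hxi'⟩ := hx'
        rw [mem_Sret_iff] at hxi hxi'
        exact hne (by rw [← hi, ← hi', ← hxi.2, ← hxi'.2])
      · ext x
        simp only [Set.mem_iUnion]
        constructor
        · rintro ⟨h, i, hi, hxi⟩
          exact (mem_Sret_iff.mp hxi).1
        · intro hx
          exact ⟨g ^ ret B g x, ret B g x, rfl, mem_Sret_iff.mpr ⟨hx, rfl⟩⟩
      · intro h x hx
        simp only [Set.mem_iUnion] at hx
        obtain ⟨i, hi, hxi⟩ := hx
        rw [mem_Sret_iff] at hxi
        simp only [gam]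
        rw [hxi.2, hi]
  · -- ergodicity of the induced action
    intro A hA hAB hinv
    set At := ⋃ h : G, (fun x => h • x) ⁻¹' A with hAtdef
    have hAtm : MeasurableSet At := MeasurableSet.iUnion fun h => (hBorel h) hA
    have hAtinv : ∀ g : G, (fun x => g • x) ⁻¹' At = At := by
      intro g
      ext x
      simp only [hAtdef, Set.mem_iUnion, Set.mem_preimage]
      constructor
      · rintro ⟨h, hh⟩
        exact ⟨h * g, by rwa [mul_smul]⟩
      · rintro ⟨h, hh⟩
        exact ⟨h * g⁻¹, by rwa [mul_smul, inv_smul_smul]⟩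
    rcases herg At hAtm (fun g => by simp) with h0 | h0
    · left
      refine measure_mono_null (fun x hx => ?_) h0
      exact Set.mem_iUnion.mpr ⟨1, by simpa using hx⟩
    · right
      have key : B \ A ⊆ Atᶜ ∪ ⋃ g : G, ((A ∆ (gam B g ⁻¹' A)) ∩ Dom B g) := by
        rintro x ⟨hxB, hxA⟩
        by_cases hx : x ∈ At
        · right
          obtain ⟨h, hh⟩ := Set.mem_iUnion.mp hx
          rw [Set.mem_preimage] at hh
          have hhB : h • x ∈ B := hAB hh
          have h1 : h ^ 1 • x ∈ B := by rwa [pow_one]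
          have hxD : x ∈ Dom B h := ⟨hxB, 1, one_pos, h1⟩
          have hret : ret B h x = 1 :=
            ret_eq one_pos h1 (fun j hj hj1 => absurd hj1 (by omega))
          have hgam : gam B h x = h • x := by rw [gam, hret, pow_one]
          refine Set.mem_iUnion.mpr ⟨h, ?_, hxD⟩
          exact Set.mem_symmDiff.mpr (Or.inr ⟨by rw [Set.mem_preimage, hgam]; exact hh, hxA⟩)
        · left; exact hx
      exact measure_mono_null key
        (measure_union_null h0 (measure_iUnion_null fun g => hinv g))
end
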